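/- For each n ≥ 0 and k ≥ 2, the list F(n,k), defined by F(n,k) = C(n) for 0 ≤ n < k and F(n,k) = 1·reverse(F(n-1,k)) ∘ 01·reverse(F(n-2,k)) ∘ ... ∘ 0^(k-1)1·reverse(F(n-k,k)) for n ≥ k (where C(0) = (λ), C(n) = 1·reverse(C(n-1)) ∘ 0·C(n-1)), contains exactly the binary strings of length n avoiding k consecutive 0's, each exactly once. -/

import Mathlib

/-! A binary word with no `k` consecutive zeros either has length `< k`, where every binary word
qualifies and `F(n,k) = C(n)` lists them all, or factors uniquely as `0^j 1 v` with `j < k` and `v`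
a shorter such word. By induction, the `j`-th block of `F(n,k)` lists the words with a given `j`
once each, and uniqueness of the factorization makes distinct blocks disjoint. -/

/-- The binary reflected Gray code `C(n)` (strings over `{0,1} ⊆ ℕ`):
`C(0) = (λ)`, `C(n) = 1·reverse(C(n-1)) ∘ 0·C(n-1)`. -/
def C : ℕ → List (List ℕ)
  | 0 => [[]]
  | n+1 => (C n).reverse.map (fun w => 1 :: w) ++ (C n).map (fun w => 0 :: w)

/-- The Gray code list `F(n,k)` of binary strings avoiding `k` consecutive `0`'s:
`F(n,k) = C(n)` for `n < k`, and for `n ≥ k`,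
`F(n,k) = 1·reverse(F(n-1,k)) ∘ 01·reverse(F(n-2,k)) ∘ ⋯ ∘ 0^(k-1)1·reverse(F(n-k,k))`. -/
def F (k : ℕ) : ℕ → List (List ℕ)
  | n =>
    if h : n < k ∨ k = 0 then C n
    else ((List.range k).map (fun j =>
      (F k (n - (j+1))).reverse.map (fun w => List.replicate j 0 ++ 1 :: w))).flatten
termination_by n => n
decreasing_by push_neg at h; omega

namespace List

variable {α : Type*} {a b : α}

theorem replicate_append_cons_inj (hab : a ≠ b) {i j : ℕ} {u v : List α} :
    replicate i a ++ b :: u = replicate j a ++ b :: v ↔ i = j ∧ u = v := by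
  induction i generalizing j with
  | zero => cases j <;> simp [replicate_succ, hab.symm]
  | succ i ih => cases j <;> simp [replicate_succ, hab, ih]

theorem replicate_prefix_replicate_append_cons_iff (hab : a ≠ b) {k j : ℕ} {v : List α} :
    replicate k a <+: replicate j a ++ b :: v ↔ k ≤ j := by
  induction k generalizing j with
  | zero => simp
  | succ k ih => cases j <;> simp [replicate_succ, hab, ih]

theorem replicate_infix_replicate_append_cons_iff (hab : a ≠ b) {k j : ℕ} (hk : k ≠ 0)
    {v : List α} : replicate k a <:+: replicate j a ++ b :: v ↔ k ≤ j ∨ replicate k a <:+: v := by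
  induction j with
  | zero =>
    obtain ⟨k, rfl⟩ := Nat.exists_eq_succ_of_ne_zero hk
    simp [infix_cons_iff, replicate_succ, hab]
  | succ j ih =>
    rw [replicate_succ, cons_append, infix_cons_iff, ← cons_append, ← replicate_succ,
      replicate_prefix_replicate_append_cons_iff hab, ih, ← or_assoc]
    exact or_congr_left (by omega)

theorem nodup_flatten_map_range_map_replicate_append_cons (hab : a ≠ b) {k : ℕ}
    {L : ℕ → List (List α)} (hL : ∀ j < k, (L j).Nodup) :
    ((range k).map fun j => (L j).map (replicate j a ++ b :: ·)).flatten.Nodup := by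
  rw [nodup_flatten, pairwise_map]
  refine ⟨?_, pairwise_lt_range.imp fun {i j} hij => ?_⟩
  · simp only [mem_map, mem_range]
    rintro _ ⟨j, hj, rfl⟩
    exact (hL j hj).map fun u v h => ((replicate_append_cons_inj hab).1 h).2
  · rintro _ hi hj
    obtain ⟨u, -, rfl⟩ := mem_map.1 hi
    obtain ⟨v, -, huv⟩ := mem_map.1 hj
    exact hij.ne ((replicate_append_cons_inj hab).1 huv).1.symm

end List

open List

theorem eq_replicate_zero_or_exists_eq_replicate_zero_append_one_cons {w : List ℕ}
    (hw : ∀ b ∈ w, b ≤ 1) : w = replicate w.length 0 ∨ ∃ j v, w = replicate j 0 ++ 1 :: v := by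
  induction w with
  | nil => simp
  | cons c w ih =>
    rw [forall_mem_cons] at hw
    obtain ⟨hc, hw⟩ := hw
    interval_cases c
    · rcases ih hw with h | ⟨j, v, rfl⟩
      · exact .inl (by rw [length_cons, replicate_succ, ← h])
      · exact .inr ⟨j + 1, v, rfl⟩
    · exact .inr ⟨0, w, rfl⟩

def IsAvoidingWord (k n : ℕ) (w : List ℕ) : Prop :=
  w.length = n ∧ (∀ b ∈ w, b ≤ 1) ∧ ¬ replicate k 0 <:+: w

theorem isAvoidingWord_iff_of_lt {k n : ℕ} (h : n < k) {w : List ℕ} :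
    IsAvoidingWord k n w ↔ w.length = n ∧ ∀ b ∈ w, b ≤ 1 := by
  refine ⟨fun hw => ⟨hw.1, hw.2.1⟩, fun ⟨hl, hb⟩ => ⟨hl, hb, fun hinf => ?_⟩⟩
  have := hinf.length_le
  rw [length_replicate] at this
  omega

theorem isAvoidingWord_iff_of_le {k n : ℕ} (hk : k ≠ 0) (h : k ≤ n) {w : List ℕ} :
    IsAvoidingWord k n w ↔
      ∃ j < k, ∃ v, IsAvoidingWord k (n - (j + 1)) v ∧ w = replicate j 0 ++ 1 :: v := by
  have h01 : (0 : ℕ) ≠ 1 := zero_ne_one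
  constructor
  · rintro ⟨hl, hb, hw⟩
    rcases eq_replicate_zero_or_exists_eq_replicate_zero_append_one_cons hb with h0 | ⟨j, v, rfl⟩
    · refine absurd (IsPrefix.isInfix ⟨replicate (n - k) 0, ?_⟩) hw
      rw [h0, hl, ← replicate_add, Nat.add_sub_cancel' h]
    · rw [replicate_infix_replicate_append_cons_iff h01 hk, not_or, not_le] at hw
      simp only [length_append, length_replicate, length_cons] at hl
      simp only [mem_append, mem_replicate, mem_cons, or_imp, forall_eq, forall_and] at hb
      exact ⟨j, hw.1, v, ⟨by omega, hb.2.2, hw.2⟩, rfl⟩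
  · rintro ⟨j, hj, v, ⟨hl, hb, hv⟩, rfl⟩
    refine ⟨?_, ?_, ?_⟩
    · simp only [length_append, length_replicate, length_cons]
      omega
    · simp only [mem_append, mem_replicate, mem_cons]
      rintro c (⟨-, rfl⟩ | rfl | hc)
      exacts [zero_le_one, le_rfl, hb c hc]
    · rw [replicate_infix_replicate_append_cons_iff h01 hk, not_or, not_le]
      exact ⟨hj, hv⟩

theorem mem_C_iff {n : ℕ} {w : List ℕ} : w ∈ C n ↔ w.length = n ∧ ∀ b ∈ w, b ≤ 1 := by
  induction n generalizing w with
  | zero => simp +contextual [C]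
  | succ n ih =>
    cases w with
    | nil => simp [C]
    | cons c w =>
      simp only [C, mem_append, mem_map, mem_reverse, cons.injEq, ih, length_cons,
        forall_mem_cons]
      grind

theorem nodup_C (n : ℕ) : (C n).Nodup := by
  induction n with
  | zero => simp [C]
  | succ n ih =>
    rw [C, nodup_append]
    exact ⟨(nodup_reverse.2 ih).map cons_injective, ih.map cons_injective, by simp⟩

theorem F_of_lt {k n : ℕ} (h : n < k) : F k n = C n := by
  rw [F, dif_pos (.inl h)]

theorem mem_F_of_le {k n : ℕ} (hk : k ≠ 0) (h : k ≤ n) {w : List ℕ} :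
    w ∈ F k n ↔ ∃ j < k, ∃ v ∈ F k (n - (j + 1)), w = replicate j 0 ++ 1 :: v := by
  rw [F, dif_neg (by omega)]
  simp [eq_comm]

theorem nodup_F (k n : ℕ) : (F k n).Nodup := by
  induction n using Nat.strong_induction_on with
  | _ n ih =>
  rw [F]
  split_ifs with h
  · exact nodup_C n
  · exact nodup_flatten_map_range_map_replicate_append_cons zero_ne_one
      fun j _ => nodup_reverse.2 (ih _ (by omega))

theorem mem_F_iff {k : ℕ} (hk : k ≠ 0) {n : ℕ} {w : List ℕ} :
    w ∈ F k n ↔ IsAvoidingWord k n w := by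
  induction n using Nat.strong_induction_on generalizing w with
  | _ n ih =>
  rcases lt_or_ge n k with h | h
  · rw [F_of_lt h, mem_C_iff, isAvoidingWord_iff_of_lt h]
  · rw [mem_F_of_le hk h, isAvoidingWord_iff_of_le hk h]
    refine exists_congr fun j => and_congr_right fun _ => exists_congr fun v => ?_
    rw [ih _ (by omega)]

/-- `F(n,k)` contains exactly the binary strings of length `n` avoiding `k`
consecutive `0`'s, each exactly once. -/
theorem stmt11 (k n : ℕ) (hk : 2 ≤ k) :
    (F k n).Nodup ∧
    ∀ w : List ℕ, w ∈ F k n ↔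
      (w.length = n ∧ (∀ b ∈ w, b ≤ 1) ∧ ¬ (List.replicate k 0 <:+: w)) :=
  ⟨nodup_F k n, fun _ => mem_F_iff (by omega)⟩
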